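/- arXiv:1402.2367 — 2 statements merged into one kernel-verified Lean document; each statement's English description precedes it below -/
import Mathlib

section
/- For every positive integer n and every real x > 0, the n-th derivative of the function x ↦ e^{1/x} equals (-1)^n e^{1/x} ∑_{k=1}^{n} L(n,k) x^{-(n+k)}. -/
open Finset

/-- Lah numbers: `L(n,k) = C(n-1,k-1) * n! / k!` (as a real number). -/
noncomputable def lah (n k : ℕ) : ℝ :=
  ((n - 1).choose (k - 1) : ℝ) * (Nat.factorial n) / (Nat.factorial k)

/-!
Write the `n`-th derivative of `e^{1/x}` as `(-1)^n e^{1/x} Q_n(1/x)`. Differentiating once more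
and substituting `t = 1/x` gives `Q_{n+1}(t) = t² (Q_n(t) + Q_n'(t))`, and on coefficients this is
exactly the Lah recurrence `L(n+1,k) = (n+k) L(n,k) + L(n,k-1)`, with `Q_1(t) = t²`.
-/

open scoped Nat

lemma lah_one_right (n : ℕ) : lah n 1 = n ! := by
  simp [lah]

lemma lah_eq_zero_of_lt {n k : ℕ} (hn : n ≠ 0) (h : n < k) : lah n k = 0 := by
  simp [lah, Nat.choose_eq_zero_of_lt (show n - 1 < k - 1 by omega)]

lemma lah_succ_succ {n k : ℕ} (hn : n ≠ 0) (hk : k ≠ 0) :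
    lah (n + 1) (k + 1) = (n + k + 1) * lah n (k + 1) + lah n k := by
  obtain ⟨m, rfl⟩ := Nat.exists_eq_succ_of_ne_zero hn
  obtain ⟨l, rfl⟩ := Nat.exists_eq_succ_of_ne_zero hk
  have absorb : ((m + 1) * m.choose l : ℝ) = (m.choose l + m.choose (l + 1)) * (l + 1) := by
    exact_mod_cast Nat.add_one_mul_choose_eq m l
  simp only [lah, Nat.succ_sub_one, Nat.succ_eq_add_one, Nat.choose_succ_succ',
    Nat.factorial_succ]
  push_cast
  field_simp
  linear_combination absorb

lemma sum_Icc_one_eq_sum_range {M : Type*} [AddCommMonoid M] (f : ℕ → M) (n : ℕ) :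
    ∑ k ∈ Icc 1 n, f k = ∑ j ∈ range n, f (j + 1) := by
  rw [← Ico_add_one_right_eq_Icc, sum_Ico_eq_sum_range, Nat.add_sub_cancel]
  simp only [add_comm 1]

noncomputable def lahPoly (n : ℕ) (t : ℝ) : ℝ :=
  ∑ k ∈ Icc 1 n, lah n k * t ^ (n + k)

-- The second sum is `t ^ 2 * Q_n'(t)`.
lemma lahPoly_succ {n : ℕ} (hn : n ≠ 0) (t : ℝ) :
    lahPoly (n + 1) t =
      t ^ 2 * lahPoly n t + ∑ k ∈ Icc 1 n, lah n k * ((n + k : ℕ) * t ^ (n + k + 1)) := by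
  set derivTerm := fun k => lah n k * ((n + k : ℕ) * t ^ (n + k + 1))
  have derivTerm_top : derivTerm (n + 1) = 0 := by
    simp [derivTerm, lah_eq_zero_of_lt hn n.lt_succ_self]
  have derivTerm_one : derivTerm (0 + 1) = lah (n + 1) (0 + 1) * t ^ (n + 1 + (0 + 1)) := by
    simp only [derivTerm, zero_add, lah_one_right, Nat.factorial_succ]
    push_cast
    ring
  have lah_step : ∀ j ∈ range n, lah (n + 1) (j + 2) * t ^ (n + 1 + (j + 2)) =
      derivTerm (j + 1 + 1) + t ^ 2 * (lah n (j + 1) * t ^ (n + (j + 1))) := by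
    intro j _
    rw [lah_succ_succ hn j.succ_ne_zero]
    push_cast [derivTerm]
    ring
  simp only [lahPoly, sum_Icc_one_eq_sum_range, mul_sum]
  rw [sum_range_succ', sum_congr rfl lah_step, sum_add_distrib,
    ← add_zero (∑ j ∈ range n, derivTerm (j + 1)), ← derivTerm_top,
    ← sum_range_succ (fun j => derivTerm (j + 1)), sum_range_succ', derivTerm_one]
  ring

lemma hasDerivAt_inv_pow (m : ℕ) {x : ℝ} (hx : x ≠ 0) :
    HasDerivAt (fun y => y⁻¹ ^ m) (-(m * x⁻¹ ^ (m + 1))) x := by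
  refine ((hasDerivAt_inv hx).fun_pow m).congr_deriv ?_
  rcases m with _ | m
  · simp
  · rw [Nat.add_sub_cancel, ← inv_pow]
    ring

lemma hasDerivAt_lahPoly_inv (n : ℕ) {x : ℝ} (hx : x ≠ 0) :
    HasDerivAt (fun y => lahPoly n y⁻¹)
      (-∑ k ∈ Icc 1 n, lah n k * ((n + k : ℕ) * x⁻¹ ^ (n + k + 1))) x := by
  refine (HasDerivAt.fun_sum fun k _ =>
    (hasDerivAt_inv_pow (n + k) hx).const_mul (lah n k)).congr_deriv ?_
  simp only [mul_neg, sum_neg_distrib]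

lemma hasDerivAt_exp_inv_mul_lahPoly_inv {n : ℕ} (hn : n ≠ 0) {x : ℝ} (hx : x ≠ 0) :
    HasDerivAt (fun y => Real.exp y⁻¹ * lahPoly n y⁻¹)
      (-(Real.exp x⁻¹ * lahPoly (n + 1) x⁻¹)) x := by
  refine ((hasDerivAt_inv hx).exp.mul (hasDerivAt_lahPoly_inv n hx)).congr_deriv ?_
  rw [lahPoly_succ hn, inv_pow]
  ring

theorem eqOn_iteratedDeriv_exp_inv {n : ℕ} (hn : n ≠ 0) :
    Set.EqOn (iteratedDeriv n fun y => Real.exp y⁻¹)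
      (fun x => (-1) ^ n * (Real.exp x⁻¹ * lahPoly n x⁻¹)) {0}ᶜ := by
  induction n, Nat.one_le_iff_ne_zero.mpr hn using Nat.le_induction with
  | base =>
    intro x hx
    rw [iteratedDeriv_one, (hasDerivAt_inv hx).exp.deriv]
    simp [lahPoly, lah]
  | succ n hn ih =>
    intro x hx
    rw [iteratedDeriv_succ, (ih (by omega)).eventuallyEq_of_mem
        (isOpen_compl_singleton.mem_nhds hx) |>.deriv_eq,
      ((hasDerivAt_exp_inv_mul_lahPoly_inv (by omega) hx).const_mul _).deriv]
    ring

theorem iteratedDeriv_exp_inv_eq_lah_sum (n : ℕ) (hn : 1 ≤ n) (x : ℝ) (hx : 0 < x) :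
    iteratedDeriv n (fun y : ℝ => Real.exp (1 / y)) x
      = (-1 : ℝ) ^ n * Real.exp (1 / x) *
        ∑ k ∈ Finset.Icc 1 n, lah n k / x ^ (n + k) := by
  simp only [one_div]
  rw [eqOn_iteratedDeriv_exp_inv (by omega) hx.ne']
  simp only [lahPoly, div_eq_mul_inv, inv_pow, mul_assoc]
end

section
/- For every nonnegative integer k and every real z > 0, e^{1/z} - ∑_{m=0}^{k} 1/(m! z^m) = (1/(k!(k+1)!)) ∫_0^∞ F_k(t) t^k e^{-zt} dt, where F_k(t) = ∑_{n=0}^∞ k!(k+1)! t^n / ((n+k)!(n+k+1)!) is the hypergeometric series ₁F₂(1; k+1, k+2; t). -/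
/-!
Expand `F_k` in its power series and integrate against `t ^ k * e^{-zt}` term by term: each term
is a Gamma integral `∫ t^m e^{-zt} dt = m! / z^(m+1)`, and the `k!(k+1)!` normalisation turns the
resulting series into `∑_{m > k} 1 / (m! z^m)`, the tail of the exponential series of `e^{1/z}`,
which also dominates the series of absolute values and so justifies the interchange.
-/

open MeasureTheory Real Finset

/-- The hypergeometric series `₁F₂(1; k+1, k+2; t) = ∑_{n=0}^∞ k!(k+1)! tⁿ / ((n+k)!(n+k+1)!)`. -/
noncomputable def hypF (k : ℕ) (t : ℝ) : ℝ :=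
  ∑' n : ℕ, ((Nat.factorial k : ℝ) * (Nat.factorial (k + 1))) * t ^ n /
    ((Nat.factorial (n + k) : ℝ) * (Nat.factorial (n + k + 1)))

open scoped Nat
open Set

lemma Real.hasSum_exp_sub_sum_range (x : ℝ) (N : ℕ) :
    HasSum (fun n ↦ x ^ (n + N) / (n + N)!) (exp x - ∑ m ∈ range N, x ^ m / m !) := by
  rw [hasSum_nat_add_iff' N (f := fun n ↦ x ^ n / n !), Real.exp_eq_exp_ℝ]
  exact NormedSpace.expSeries_div_hasSum_exp x

lemma integral_pow_mul_exp_neg_mul_Ioi (m : ℕ) {z : ℝ} (hz : 0 < z) :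
    ∫ t in Ioi (0 : ℝ), t ^ m * exp (-(z * t)) = m ! / z ^ (m + 1) := by
  have key := integral_rpow_mul_exp_neg_mul_Ioi (by positivity : (0 : ℝ) < m + 1) hz
  simp_rw [add_sub_cancel_right, rpow_natCast, Gamma_nat_eq_factorial] at key
  rw [key, div_eq_mul_inv, one_mul, mul_comm, inv_rpow hz.le, ← rpow_natCast]
  norm_cast

lemma integrableOn_pow_mul_exp_neg_mul_Ioi (m : ℕ) {z : ℝ} (hz : 0 < z) :
    IntegrableOn (fun t ↦ t ^ m * exp (-(z * t))) (Ioi 0) :=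
  .of_integral_ne_zero (by rw [integral_pow_mul_exp_neg_mul_Ioi m hz]; positivity)

lemma integral_tsum_mul_pow_mul_exp_neg_mul_Ioi (a : ℕ → ℝ) (k : ℕ) {z : ℝ} (hz : 0 < z)
    (ha : Summable fun n ↦ |a n| * ((n + k)! / z ^ (n + k + 1))) :
    ∫ t in Ioi (0 : ℝ), (∑' n, a n * t ^ n) * t ^ k * exp (-(z * t))
      = ∑' n, a n * ((n + k)! / z ^ (n + k + 1)) := by
  set F : ℕ → ℝ → ℝ := fun n t ↦ a n * (t ^ (n + k) * exp (-(z * t)))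
  have hF_int (n : ℕ) : IntegrableOn (F n) (Ioi 0) :=
    (integrableOn_pow_mul_exp_neg_mul_Ioi (n + k) hz).const_mul (a n)
  have hF_norm (n : ℕ) : ∫ t in Ioi (0 : ℝ), ‖F n t‖ = |a n| * ((n + k)! / z ^ (n + k + 1)) := by
    rw [← integral_pow_mul_exp_neg_mul_Ioi (n + k) hz, ← integral_const_mul]
    refine setIntegral_congr_fun measurableSet_Ioi fun t (ht : 0 < t) ↦ ?_
    change |a n * (t ^ (n + k) * exp (-(z * t)))| = _
    rw [abs_mul, abs_of_nonneg (a := t ^ (n + k) * exp _) (by positivity)]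
  have hsum := hasSum_integral_of_summable_integral_norm hF_int (by simpa only [hF_norm] using ha)
  simp only [F, integral_const_mul, integral_pow_mul_exp_neg_mul_Ioi _ hz] at hsum
  rw [hsum.tsum_eq]
  congr 1 with t
  rw [← tsum_mul_right, ← tsum_mul_right]
  exact tsum_congr fun n ↦ by ring

theorem exp_inv_tail_integral_repr (k : ℕ) (z : ℝ) (hz : 0 < z) :
    Real.exp (1 / z) - ∑ m ∈ Finset.range (k + 1), 1 / ((Nat.factorial m : ℝ) * z ^ m)
      = (1 / ((Nat.factorial k : ℝ) * (Nat.factorial (k + 1)))) *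
        ∫ t in Set.Ioi (0 : ℝ), hypF k t * t ^ k * Real.exp (-(z * t)) := by
  set c : ℝ := k ! * (k + 1)!
  set a : ℕ → ℝ := fun n ↦ c / ((n + k)! * (n + k + 1)!)
  have hypF_eq (t : ℝ) : hypF k t = ∑' n, a n * t ^ n :=
    tsum_congr fun n ↦ mul_div_right_comm _ _ _
  have hterm (n : ℕ) : a n * ((n + k)! / z ^ (n + k + 1))
      = c * ((1 / z) ^ (n + (k + 1)) / (n + (k + 1))!) := by
    rw [← add_assoc, div_pow, one_pow]
    simp only [a]
    field_simp
  have htail := (Real.hasSum_exp_sub_sum_range (1 / z) (k + 1)).mul_left c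
  simp_rw [← hterm] at htail
  simp_rw [hypF_eq]
  rw [integral_tsum_mul_pow_mul_exp_neg_mul_Ioi a k hz
    (htail.summable.congr fun n ↦ by rw [abs_of_nonneg (by positivity)])]
  have hpartial : ∑ m ∈ range (k + 1), (1 / z) ^ m / m ! = ∑ m ∈ range (k + 1), 1 / (m ! * z ^ m) :=
    sum_congr rfl fun m _ ↦ by rw [div_pow, one_pow, div_div, mul_comm]
  rw [← hpartial, htail.tsum_eq, one_div c, inv_mul_cancel_left₀ (by positivity)]
end
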